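/- For all g ∈ (0,1/2): 1 ≥ 3·E(2g(1−4g²)/(1+8g³))². (States from MES₃ of the form (1/√k)·g_x¹⊗g_x²⊗g_x³|GHZ⟩ with g₁ = g₂ = g₃ = g ≠ 0 have source entanglement E_s = 1 and satisfy the source-entanglement monogamy relation E_s² ≥ E₁₂² + E₁₃² + E₂₃².) -/

import Mathlib

/-- Binary Shannon entropy (base 2), with the convention `0 * log₂ 0 = 0`
(automatic since `Real.logb 2 0 = 0`). -/
noncomputable def binEntropy (p : ℝ) : ℝ :=
  -p * Real.logb 2 p - (1 - p) * Real.logb 2 (1 - p)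

/-- Entanglement-of-formation function of the concurrence `C`. -/
noncomputable def eof (C : ℝ) : ℝ :=
  binEntropy ((1 + Real.sqrt (1 - C ^ 2)) / 2)

/-!
By the symmetry of `h`, `E(C) = h(q)` for the smaller eigenvalue `q = (1 - √(1 - C²))/2`.
Bounding `-q ln q ≤ 2(√q - q)` (apply `-x ln x ≤ 1 - x` at `x = √q`) and
`-(1-q) ln(1-q) ≤ q` gives `h(q) ≤ (2√q - q)/ln 2`. For `g ∈ (0, 1/2)` the concurrence is at
most `3/8`, which forces `q ≤ 1/25`, so `E(C) ≤ 2/(5 ln 2)` and `3 E(C)² ≤ 12/(25 ln² 2) < 1`.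
-/

namespace Real

lemma negMulLog_le_two_mul_sqrt_sub_self {x : ℝ} (hx : 0 ≤ x) :
    negMulLog x ≤ 2 * (√x - x) :=
  calc negMulLog x = negMulLog (√x * √x) := by rw [mul_self_sqrt hx]
    _ = 2 * √x * negMulLog √x := by
        rw [negMulLog_mul]
        ring
    _ ≤ 2 * √x * (1 - √x) := by
        gcongr
        exact negMulLog_le_one_sub_self (sqrt_nonneg x)
    _ = 2 * (√x - x) := by linear_combination (-2) * mul_self_sqrt hx

lemma binEntropy_le_two_mul_sqrt_sub_self {p : ℝ} (hp₀ : 0 ≤ p) (hp₁ : p ≤ 1) :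
    binEntropy p ≤ 2 * √p - p := by
  rw [binEntropy_eq_negMulLog_add_negMulLog_one_sub]
  linarith [negMulLog_le_two_mul_sqrt_sub_self hp₀, negMulLog_le_one_sub_self (sub_nonneg.2 hp₁)]

end Real

lemma binEntropy_eq_div_log_two (p : ℝ) : binEntropy p = Real.binEntropy p / Real.log 2 := by
  simp only [binEntropy, Real.binEntropy_eq_negMulLog_add_negMulLog_one_sub, Real.negMulLog,
    Real.logb]
  ring

lemma eof_eq (C : ℝ) : eof C = Real.binEntropy ((1 - √(1 - C ^ 2)) / 2) / Real.log 2 := by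
  rw [eof, binEntropy_eq_div_log_two, ← Real.binEntropy_one_sub]
  ring_nf

lemma eof_nonneg (C : ℝ) : 0 ≤ eof C := by
  rw [eof_eq]
  have hs : √(1 - C ^ 2) ≤ 1 := Real.sqrt_le_one.2 (by nlinarith)
  have : 0 ≤ Real.binEntropy ((1 - √(1 - C ^ 2)) / 2) :=
    Real.binEntropy_nonneg (by linarith) (by linarith [Real.sqrt_nonneg (1 - C ^ 2)])
  positivity

/-- `96/625 = 1 - (23/25)²`, chosen so that the smaller eigenvalue is at most `1/25`. -/
lemma eof_le_of_sq_le {C : ℝ} (hC : C ^ 2 ≤ 96 / 625) : eof C ≤ 2 / 5 / Real.log 2 := by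
  set q := (1 - √(1 - C ^ 2)) / 2 with hq
  have hs : 23 / 25 ≤ √(1 - C ^ 2) := Real.le_sqrt_of_sq_le (by linarith)
  have hs₁ : √(1 - C ^ 2) ≤ 1 := Real.sqrt_le_one.2 (by nlinarith)
  have hq₀ : 0 ≤ q := by linarith
  have hq_sqrt : √q ≤ 1 / 5 := Real.sqrt_le_iff.2 ⟨by norm_num, by linarith⟩
  rw [eof_eq]
  gcongr
  linarith [Real.binEntropy_le_two_mul_sqrt_sub_self hq₀ (by linarith : q ≤ 1)]

noncomputable def ghzConcurrence (g : ℝ) : ℝ := 2 * g * (1 - 4 * g ^ 2) / (1 + 8 * g ^ 3)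

lemma ghzConcurrence_nonneg {g : ℝ} (hg₀ : 0 ≤ g) (hg₁ : g ≤ 1 / 2) : 0 ≤ ghzConcurrence g := by
  unfold ghzConcurrence
  have : 0 ≤ 1 - 4 * g ^ 2 := by nlinarith
  positivity

lemma ghzConcurrence_le {g : ℝ} (hg : 0 ≤ g) : ghzConcurrence g ≤ 3 / 8 := by
  rw [ghzConcurrence, div_le_iff₀ (by positivity)]
  nlinarith [mul_nonneg hg (sq_nonneg (g - 1 / 4)), sq_nonneg (g - 1 / 4)]

/-- States from MES₃ of the form `(1/√k)·g_x¹⊗g_x²⊗g_x³|GHZ⟩` with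
`g₁ = g₂ = g₃ = g ≠ 0` satisfy the source-entanglement monogamy relation
`E_s² ≥ E₁₂² + E₁₃² + E₂₃²` with `E_s = 1`. -/
theorem source_monogamy_mes (g : ℝ) (hg : g ∈ Set.Ioo (0 : ℝ) (1 / 2)) :
    1 ≥ 3 * (eof (2 * g * (1 - 4 * g ^ 2) / (1 + 8 * g ^ 3))) ^ 2 := by
  change 3 * eof (ghzConcurrence g) ^ 2 ≤ 1
  have hC₀ := ghzConcurrence_nonneg hg.1.le hg.2.le
  have hC₁ := ghzConcurrence_le hg.1.le
  have hlog₂ := Real.log_two_gt_d9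
  calc 3 * eof (ghzConcurrence g) ^ 2 ≤ 3 * (2 / 5 / Real.log 2) ^ 2 := by
        gcongr
        · exact eof_nonneg _
        · exact eof_le_of_sq_le (by nlinarith)
    _ ≤ 1 := by
        rw [div_pow, ← mul_div_assoc, div_le_one (by positivity)]
        nlinarith
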